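/- arXiv:1711.11090 — 6 statements merged into one kernel-verified Lean document; each statement's English description precedes it below -/
import Mathlib

section
/- Let P(x,y) = x·∏_{k=1}^N (x − conj(α_k) y) − ∏_{k=1}^N (y − α_k x) with α_1,…,α_N ∈ 𝔻, N ≥ 1. If (x,y) ∈ 𝔻² satisfies P(x,y) = 0 and x = 0, then y = 0; and if x ≠ 0, then setting z = y/x one has x = B(z) and y = z·B(z), where B is the Blaschke product with zeros α_1,…,α_N. -/
open Finset ComplexConjugate

/-- The finite Blaschke product with zeros `α 0, …, α (N-1)`. -/
noncomputable def blaschke (N : ℕ) (α : Fin N → ℂ) (z : ℂ) : ℂ :=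
  ∏ k, (z - α k) / (1 - conj (α k) * z)

/-!
On the line `y = z x` with `x ≠ 0`, the relation `P(x, y) = 0` is `x^N` times
`x ∏ (1 - conj αₖ z) = ∏ (z - αₖ)`. No factor `1 - conj αₖ z` can vanish: otherwise the right side
vanishes too, forcing `z = αⱼ ∈ 𝔻`, while `|conj αₖ z| < 1`. Dividing gives `x = B(z)`.
-/

theorem Complex.one_sub_conj_mul_ne_zero {a z : ℂ} (ha : ‖a‖ ≤ 1) (hz : ‖z‖ < 1) :
    1 - conj a * z ≠ 0 := by
  intro h
  have h1 : ‖conj a * z‖ = 1 := by rw [← sub_eq_zero.mp h, norm_one]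
  rw [norm_mul, RCLike.norm_conj] at h1
  nlinarith [norm_nonneg a, norm_nonneg z]

theorem mul_prod_sub_sub_prod_sub_eq_pow_mul {R ι : Type*} [CommRing R] [Fintype ι]
    (a c : ι → R) (x z : R) :
    x * ∏ k, (x - c k * (z * x)) - ∏ k, (z * x - a k * x) =
      x ^ Fintype.card ι * (x * ∏ k, (1 - c k * z) - ∏ k, (z - a k)) := by
  have hc : ∏ k, (x - c k * (z * x)) = x ^ Fintype.card ι * ∏ k, (1 - c k * z) := by
    rw [← card_univ, pow_card_mul_prod]
    exact prod_congr rfl fun k _ ↦ by ring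
  have ha : ∏ k, (z * x - a k * x) = x ^ Fintype.card ι * ∏ k, (z - a k) := by
    rw [← card_univ, pow_card_mul_prod]
    exact prod_congr rfl fun k _ ↦ by ring
  rw [hc, ha]
  ring

theorem blaschke_eq_of_mul_prod_eq {N : ℕ} {α : Fin N → ℂ} (hα : ∀ k, ‖α k‖ < 1) {x z : ℂ}
    (h : x * ∏ k, (1 - conj (α k) * z) = ∏ k, (z - α k)) : blaschke N α z = x := by
  have hden : ∏ k, (1 - conj (α k) * z) ≠ 0 := by
    intro h0
    rw [h0, mul_zero, eq_comm, prod_eq_zero_iff] at h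
    obtain ⟨j, -, hj⟩ := h
    rw [sub_eq_zero] at hj
    obtain ⟨k, -, hk⟩ := prod_eq_zero_iff.mp h0
    exact Complex.one_sub_conj_mul_ne_zero (hα k).le (hj ▸ hα j) hk
  rw [blaschke, prod_div_distrib, ← h, mul_div_cancel_right₀ _ hden]

theorem stmt3_general (N : ℕ) (hN : 1 ≤ N) (α : Fin N → ℂ) (hα : ∀ k, ‖α k‖ < 1)
    (x y : ℂ)
    (hP : x * (∏ k, (x - conj (α k) * y)) - (∏ k, (y - α k * x)) = 0) :
    (x = 0 → y = 0) ∧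
    (x ≠ 0 → blaschke N α (y / x) = x ∧ (y / x) * blaschke N α (y / x) = y) := by
  constructor
  · rintro rfl
    simp only [zero_mul, mul_zero, sub_zero, zero_sub, neg_eq_zero, prod_const, card_univ,
      Fintype.card_fin] at hP
    exact (pow_eq_zero_iff (by omega)).mp hP
  · intro hx
    have hy : y = y / x * x := (div_mul_cancel₀ y hx).symm
    rw [hy, mul_prod_sub_sub_prod_sub_eq_pow_mul (fun k ↦ α k) (fun k ↦ conj (α k)),
      mul_eq_zero, sub_eq_zero] at hP
    have hB := blaschke_eq_of_mul_prod_eq hα (hP.resolve_left (pow_ne_zero _ hx))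
    exact ⟨hB, by rw [hB, ← hy]⟩

theorem stmt3 (N : ℕ) (hN : 1 ≤ N) (α : Fin N → ℂ) (hα : ∀ k, ‖α k‖ < 1)
    (x y : ℂ) (hx : ‖x‖ < 1) (hy : ‖y‖ < 1)
    (hP : x * (∏ k, (x - conj (α k) * y)) - (∏ k, (y - α k * x)) = 0) :
    (x = 0 → y = 0) ∧
    (x ≠ 0 → blaschke N α (y / x) = x ∧ (y / x) * blaschke N α (y / x) = y) :=
  stmt3_general N hN α hα x y hP
end

section
/- Let μ = ∑_{i=1}^n m_i δ_{λ_i} be a finitely supported positive atomic measure on the unit circle 𝕋 with distinct support points λ_i ∈ 𝕋 and weights m_i > 0, and let f(z) = ∑_{i=1}^n m_i (λ_i + z)/(λ_i − z) be its Herglotz transform. Then φ := (f − 1)/(f + 1) is a unimodular constant multiple of a finite Blaschke product with exactly n zeros counted with multiplicity, and φ(0) is real. -/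
/-!
Write `G = ∑ mᵢ (X + λᵢ) ∏_{k ≠ i} (X - λₖ)` and `H = ∏ (X - λᵢ)`, so that `f = -G/H` and
`φ = (G + H)/(G - H)`. The polynomial `G + H` has degree `n` and leading coefficient
`∑ mᵢ + 1 > 0`, and its roots `αⱼ` lie in `𝔻`: a root `β` with `|β| ≥ 1` is not a node `λᵢ`
(there `H = 0 ≠ G`), so `f(β) = 1`, while `Re f(β) = ∑ mᵢ (1 - |β|²)/|λᵢ - β|² ≤ 0`.
Because `|λᵢ| = 1`, reflection in the circle, `p ↦ (-z)ⁿ conj (p (1/z̄))`, sends `G + H` to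
`-conj (∏ λᵢ) (G - H)`, and it sends `∏ (z - αⱼ)` to `(-1)ⁿ ∏ (1 - conj αⱼ z)`. Hence `G - H` is
`-(-1)ⁿ (∏ λᵢ) (∑ mᵢ + 1) ∏ (1 - conj αⱼ z)`, and `φ` is a Blaschke product times a unimodular
constant, with `φ(0) = (∑ mᵢ - 1)/(∑ mᵢ + 1)` real.
-/

open Finset ComplexConjugate Polynomial

theorem Polynomial.exists_eval_eq_leadingCoeff_mul_prod_sub {K : Type*} [Field K] [IsAlgClosed K]
    {p : K[X]} {n : ℕ} (hn : p.natDegree = n) :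
    ∃ α : Fin n → K, (∀ j, p.IsRoot (α j)) ∧ ∀ x, p.eval x = p.leadingCoeff * ∏ j, (x - α j) := by
  have hsplit := IsAlgClosed.splits p
  have hlen : n = p.roots.toList.length := by
    rw [Multiset.length_toList, splits_iff_card_roots.mp hsplit, hn]
  refine ⟨fun j => p.roots.toList[(j.cast hlen).1],
    fun j => isRoot_of_mem_roots (Multiset.mem_toList.mp (List.getElem_mem _)), fun x => ?_⟩
  dsimp only
  rw [hsplit.eval_eq_prod_roots, Fin.prod_congr' (fun i => x - p.roots.toList[i.1]) hlen,
    Fin.prod_univ_fun_getElem, ← Multiset.prod_coe, ← Multiset.map_coe, Multiset.coe_toList]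

theorem Complex.re_add_div_sub_of_norm_eq_one {l : ℂ} (hl : ‖l‖ = 1) (z : ℂ) :
    ((l + z) / (l - z)).re = (1 - ‖z‖ ^ 2) / ‖l - z‖ ^ 2 := by
  have hl' : l.re * l.re + l.im * l.im = 1 := by
    rw [← Complex.normSq_apply, ← Complex.sq_norm, hl, one_pow]
  rw [Complex.div_re, ← add_div, Complex.sq_norm, Complex.sq_norm, Complex.normSq_apply z]
  congr 1
  simp only [Complex.add_re, Complex.sub_re, Complex.add_im, Complex.sub_im]
  linear_combination hl'

theorem Complex.mul_conj_inv_conj_sub {z : ℂ} (hz : z ≠ 0) (a : ℂ) :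
    z * conj ((conj z)⁻¹ - a) = 1 - conj a * z := by
  rw [map_sub, map_inv₀, Complex.conj_conj, mul_sub, mul_inv_cancel₀ hz, mul_comm]

theorem Complex.neg_mul_conj_inv_conj_sub {z l : ℂ} (hz : z ≠ 0) (hl : ‖l‖ = 1) :
    -z * conj ((conj z)⁻¹ - l) = conj l * (z - l) := by
  have hll : conj l * l = 1 := by rw [Complex.conj_mul', hl]; norm_num
  rw [neg_mul, Complex.mul_conj_inv_conj_sub hz]
  linear_combination hll

theorem Complex.pow_card_mul_conj_prod_inv_conj_sub {κ : Type*} [Fintype κ] {z : ℂ} (hz : z ≠ 0)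
    (a : ℂ) (α : κ → ℂ) :
    z ^ Fintype.card κ * conj (a * ∏ j, ((conj z)⁻¹ - α j)) =
      conj a * ∏ j, (1 - conj (α j) * z) := by
  rw [map_mul, map_prod, mul_left_comm, ← card_univ, ← prod_const, ← prod_mul_distrib]
  simp only [Complex.mul_conj_inv_conj_sub hz]

theorem Complex.prod_neg_mul_conj_inv_conj_sub {ι : Type*} {s : Finset ι} {z : ℂ} (hz : z ≠ 0)
    {lam : ι → ℂ} (hlam : ∀ i, ‖lam i‖ = 1) :
    ∏ k ∈ s, (-z * conj ((conj z)⁻¹ - lam k)) = (∏ k ∈ s, conj (lam k)) * ∏ k ∈ s, (z - lam k) := by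
  rw [← prod_mul_distrib]
  exact prod_congr rfl fun k _ => Complex.neg_mul_conj_inv_conj_sub hz (hlam k)

namespace Herglotz

variable {ι : Type*} [Fintype ι]

noncomputable def transform (lam : ι → ℂ) (m : ι → ℝ) (z : ℂ) : ℂ :=
  ∑ i, (m i : ℂ) * (lam i + z) / (lam i - z)

theorem re_transform {lam : ι → ℂ} (hlam : ∀ i, ‖lam i‖ = 1) (m : ι → ℝ) (z : ℂ) :
    (transform lam m z).re = ∑ i, m i * ((1 - ‖z‖ ^ 2) / ‖lam i - z‖ ^ 2) := by
  simp only [transform, Complex.re_sum, mul_div_assoc, Complex.re_ofReal_mul,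
    Complex.re_add_div_sub_of_norm_eq_one (hlam _)]

theorem re_transform_nonpos {lam : ι → ℂ} (hlam : ∀ i, ‖lam i‖ = 1) {m : ι → ℝ}
    (hm : ∀ i, 0 ≤ m i) {z : ℂ} (hz : 1 ≤ ‖z‖) : (transform lam m z).re ≤ 0 := by
  rw [re_transform hlam]
  refine sum_nonpos fun i _ => mul_nonpos_of_nonneg_of_nonpos (hm i) ?_
  exact div_nonpos_of_nonpos_of_nonneg (by nlinarith) (sq_nonneg _)

theorem transform_zero {lam : ι → ℂ} (hlam : ∀ i, lam i ≠ 0) (m : ι → ℝ) :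
    transform lam m 0 = ((∑ i, m i : ℝ) : ℂ) := by
  push_cast
  exact sum_congr rfl fun i _ => by rw [add_zero, sub_zero, mul_div_assoc, div_self (hlam i), mul_one]

noncomputable def den (lam : ι → ℂ) : ℂ[X] := ∏ i, (X - C (lam i))

theorem eval_den (lam : ι → ℂ) (z : ℂ) : (den lam).eval z = ∏ i, (z - lam i) := by
  simp [den, eval_prod]

theorem eval_den_ne_zero {lam : ι → ℂ} {z : ℂ} (hz : ∀ i, lam i ≠ z) : (den lam).eval z ≠ 0 := by
  rw [eval_den]
  exact prod_ne_zero_iff.mpr fun i _ => sub_ne_zero.mpr (hz i).symm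

theorem monic_den (lam : ι → ℂ) : (den lam).Monic :=
  monic_prod_of_monic _ _ fun _ _ => monic_X_sub_C _

theorem natDegree_den (lam : ι → ℂ) : (den lam).natDegree = Fintype.card ι := by
  rw [den, natDegree_finsetProd_X_sub_C_eq_card, card_univ]

theorem reflect_den {lam : ι → ℂ} (hlam : ∀ i, ‖lam i‖ = 1) {z : ℂ} (hz : z ≠ 0) :
    (-z) ^ Fintype.card ι * conj ((den lam).eval (conj z)⁻¹) =
      conj (∏ i, lam i) * (den lam).eval z := by
  rw [eval_den, eval_den, map_prod, map_prod, ← card_univ, ← prod_const, ← prod_mul_distrib,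
    Complex.prod_neg_mul_conj_inv_conj_sub hz hlam]

variable [DecidableEq ι]

noncomputable def numTerm (lam : ι → ℂ) (i : ι) : ℂ[X] :=
  (X + C (lam i)) * ∏ k ∈ univ.erase i, (X - C (lam k))

noncomputable def num (lam : ι → ℂ) (m : ι → ℝ) : ℂ[X] := ∑ i, C (m i : ℂ) * numTerm lam i

theorem eval_numTerm (lam : ι → ℂ) (i : ι) (z : ℂ) :
    (numTerm lam i).eval z = (z + lam i) * ∏ k ∈ univ.erase i, (z - lam k) := by
  simp [numTerm, eval_prod]

theorem eval_num (lam : ι → ℂ) (m : ι → ℝ) (z : ℂ) :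
    (num lam m).eval z = ∑ i, (m i : ℂ) * (numTerm lam i).eval z := by
  simp [num, eval_finsetSum]

theorem eval_num_self (lam : ι → ℂ) (m : ι → ℝ) (i : ι) :
    (num lam m).eval (lam i) = m i * (2 * lam i) * ∏ k ∈ univ.erase i, (lam i - lam k) := by
  rw [eval_num, sum_eq_single i, eval_numTerm, two_mul, mul_assoc]
  · intro j _ hji
    rw [eval_numTerm, prod_eq_zero (mem_erase.mpr ⟨hji.symm, mem_univ i⟩) (sub_self _)]
    ring
  · exact fun h => absurd (mem_univ i) h

theorem reflect_numTerm {lam : ι → ℂ} (hlam : ∀ i, ‖lam i‖ = 1) {z : ℂ} (hz : z ≠ 0) (i : ι) :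
    (-z) ^ Fintype.card ι * conj ((numTerm lam i).eval (conj z)⁻¹) =
      -(conj (∏ i, lam i) * (numTerm lam i).eval z) := by
  have hi : -z * conj ((conj z)⁻¹ + lam i) = -(conj (lam i) * (z + lam i)) := by
    have := Complex.neg_mul_conj_inv_conj_sub hz (l := -lam i) (by rw [norm_neg, hlam])
    rw [sub_neg_eq_add, sub_neg_eq_add, map_neg] at this
    linear_combination this
  rw [eval_numTerm, eval_numTerm, map_prod, ← mul_prod_erase _ _ (mem_univ i), ← card_univ,
    ← prod_const, ← mul_prod_erase _ _ (mem_univ i), map_mul, map_prod]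
  calc -z * (∏ k ∈ univ.erase i, -z) * (conj ((conj z)⁻¹ + lam i) *
        ∏ k ∈ univ.erase i, conj ((conj z)⁻¹ - lam k))
      = (-z * conj ((conj z)⁻¹ + lam i)) *
          ∏ k ∈ univ.erase i, (-z * conj ((conj z)⁻¹ - lam k)) := by
        rw [prod_mul_distrib]; ring
    _ = _ := by
        rw [hi, Complex.prod_neg_mul_conj_inv_conj_sub hz hlam]
        ring

theorem reflect_num {lam : ι → ℂ} (hlam : ∀ i, ‖lam i‖ = 1) (m : ι → ℝ) {z : ℂ} (hz : z ≠ 0) :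
    (-z) ^ Fintype.card ι * conj ((num lam m).eval (conj z)⁻¹) =
      -(conj (∏ i, lam i) * (num lam m).eval z) := by
  simp only [eval_num, map_sum, map_mul, Complex.conj_ofReal, mul_sum, ← sum_neg_distrib]
  refine sum_congr rfl fun i _ => ?_
  rw [mul_left_comm, reflect_numTerm hlam hz]
  ring

theorem transform_eq_neg_div {lam : ι → ℂ} (m : ι → ℝ) {z : ℂ} (hz : ∀ i, lam i ≠ z) :
    transform lam m z = -(num lam m).eval z / (den lam).eval z := by
  have hden : ∀ i, z - lam i ≠ 0 := fun i => sub_ne_zero.mpr (hz i).symm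
  simp only [eval_num, eval_numTerm, eval_den, ← sum_neg_distrib, sum_div, transform]
  refine sum_congr rfl fun i _ => ?_
  have hrest : ∏ k ∈ univ.erase i, (z - lam k) ≠ 0 := prod_ne_zero_iff.mpr fun k _ => hden k
  rw [← mul_prod_erase _ _ (mem_univ i)]
  field_simp [hden i, hrest, sub_ne_zero.mpr (hz i)]
  ring

theorem monic_numTerm (lam : ι → ℂ) (i : ι) : (numTerm lam i).Monic :=
  (monic_X_add_C _).mul (monic_prod_of_monic _ _ fun _ _ => monic_X_sub_C _)

theorem natDegree_numTerm (lam : ι → ℂ) (i : ι) : (numTerm lam i).natDegree = Fintype.card ι := by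
  rw [numTerm, (monic_X_add_C _).natDegree_mul (monic_prod_of_monic _ _ fun _ _ => monic_X_sub_C _),
    natDegree_X_add_C, natDegree_finsetProd_X_sub_C_eq_card, card_erase_of_mem (mem_univ i),
    card_univ, add_tsub_cancel_of_le (Fintype.card_pos_iff.mpr ⟨i⟩)]

theorem natDegree_num_le (lam : ι → ℂ) (m : ι → ℝ) : (num lam m).natDegree ≤ Fintype.card ι :=
  natDegree_sum_le_of_forall_le _ _ fun i _ =>
    (natDegree_C_mul_le _ _).trans (natDegree_numTerm lam i).le

theorem coeff_num_card (lam : ι → ℂ) (m : ι → ℝ) :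
    (num lam m).coeff (Fintype.card ι) = ∑ i, (m i : ℂ) := by
  simp only [num, finsetSum_coeff, coeff_C_mul]
  refine sum_congr rfl fun i _ => ?_
  rw [← natDegree_numTerm lam i, (monic_numTerm lam i).coeff_natDegree, mul_one]

theorem coeff_num_add_den_card (lam : ι → ℂ) (m : ι → ℝ) :
    (num lam m + den lam).coeff (Fintype.card ι) = ((∑ i, m i + 1 : ℝ) : ℂ) := by
  rw [coeff_add, coeff_num_card, ← natDegree_den lam, (monic_den lam).coeff_natDegree]
  push_cast
  rfl

theorem natDegree_num_add_den (lam : ι → ℂ) {m : ι → ℝ} (hm : ∀ i, 0 ≤ m i) :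
    (num lam m + den lam).natDegree = Fintype.card ι := by
  refine natDegree_eq_of_le_of_coeff_ne_zero ?_ ?_
  · exact natDegree_add_le_of_degree_le (natDegree_num_le lam m) (natDegree_den lam).le
  · rw [coeff_num_add_den_card, Complex.ofReal_ne_zero]
    exact (add_pos_of_nonneg_of_pos (sum_nonneg fun i _ => hm i) one_pos).ne'

theorem leadingCoeff_num_add_den (lam : ι → ℂ) {m : ι → ℝ} (hm : ∀ i, 0 ≤ m i) :
    (num lam m + den lam).leadingCoeff = ((∑ i, m i + 1 : ℝ) : ℂ) := by
  rw [leadingCoeff, natDegree_num_add_den lam hm, coeff_num_add_den_card]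

theorem transform_sub_one_div_add_one {lam : ι → ℂ} (m : ι → ℝ) {z : ℂ} (hz : ∀ i, lam i ≠ z) :
    (transform lam m z - 1) / (transform lam m z + 1) =
      (num lam m + den lam).eval z / (num lam m - den lam).eval z := by
  have hden := eval_den_ne_zero hz
  rw [transform_eq_neg_div m hz, div_sub_one hden, div_add_one hden,
    div_div_div_cancel_right₀ hden, eval_add, eval_sub, ← neg_div_neg_eq]
  ring_nf

theorem norm_lt_one_of_isRoot {lam : ι → ℂ} (hinj : Function.Injective lam)
    (hlam : ∀ i, ‖lam i‖ = 1) {m : ι → ℝ} (hm : ∀ i, 0 < m i) {β : ℂ}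
    (hβ : (num lam m + den lam).IsRoot β) : ‖β‖ < 1 := by
  by_contra! hβ1
  by_cases hnode : ∃ i, lam i = β
  · obtain ⟨i, rfl⟩ := hnode
    have hden : (den lam).eval (lam i) = 0 := by
      rw [eval_den]
      exact prod_eq_zero (mem_univ i) (sub_self _)
    have hnum : (num lam m).eval (lam i) = 0 := by
      simpa [IsRoot, hden] using hβ
    have hlam0 : lam i ≠ 0 := by
      rintro h
      simpa [h] using hlam i
    rw [eval_num_self] at hnum
    refine mul_ne_zero (mul_ne_zero ?_ (mul_ne_zero two_ne_zero hlam0)) ?_ hnum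
    · exact_mod_cast (hm i).ne'
    · exact prod_ne_zero_iff.mpr fun k hk =>
        sub_ne_zero.mpr fun h => ne_of_mem_erase hk (hinj h).symm
  · push Not at hnode
    have hsum : (num lam m).eval β + (den lam).eval β = 0 := by rwa [← eval_add]
    have hone : transform lam m β = 1 := by
      rw [transform_eq_neg_div m hnode, show -(num lam m).eval β = (den lam).eval β by
        linear_combination -hsum, div_self (eval_den_ne_zero hnode)]
    have := re_transform_nonpos hlam (fun i => (hm i).le) hβ1
    rw [hone, Complex.one_re] at this
    exact absurd this (by norm_num)

theorem eval_num_sub_den {lam : ι → ℂ} (hlam : ∀ i, ‖lam i‖ = 1) (m : ι → ℝ)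
    {κ : Type*} [Fintype κ] (hκ : Fintype.card κ = Fintype.card ι) {a : ℝ} {α : κ → ℂ}
    (hfac : ∀ w, (num lam m + den lam).eval w = a * ∏ j, (w - α j)) (z : ℂ) :
    (num lam m - den lam).eval z =
      -(-1) ^ Fintype.card ι * (∏ i, lam i) * a * ∏ j, (1 - conj (α j) * z) := by
  set Λ := ∏ i, lam i
  have hΛ : Λ * conj Λ = 1 := by
    rw [Complex.mul_conj', norm_prod, prod_eq_one fun i _ => hlam i]
    norm_num
  have hcont : Continuous fun z ↦ -(-1) ^ Fintype.card ι * Λ * a * ∏ j, (1 - conj (α j) * z) := by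
    fun_prop
  refine congrFun (Continuous.ext_on (dense_compl_singleton 0) (num lam m - den lam).continuous
    hcont fun z (hz : z ≠ 0) => ?_) z
  have hreflect : -conj Λ * (num lam m - den lam).eval z =
      (-1) ^ Fintype.card ι * (a * ∏ j, (1 - conj (α j) * z)) := by
    calc -conj Λ * (num lam m - den lam).eval z
        = (-z) ^ Fintype.card ι * conj ((num lam m + den lam).eval (conj z)⁻¹) := by
          rw [eval_add, map_add, mul_add, reflect_num hlam m hz, reflect_den hlam hz, eval_sub]
          ring
      _ = (-1) ^ Fintype.card ι * (z ^ Fintype.card κ * conj (a * ∏ j, ((conj z)⁻¹ - α j))) := by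
          rw [hfac, hκ, neg_pow]
          ring
      _ = _ := by rw [Complex.pow_card_mul_conj_prod_inv_conj_sub hz, Complex.conj_ofReal]
  linear_combination (-Λ) * hreflect - (num lam m - den lam).eval z * hΛ

end Herglotz

open Herglotz

theorem stmt6 (n : ℕ) (lam : Fin n → ℂ) (hdist : Function.Injective lam)
    (hlam : ∀ i, ‖lam i‖ = 1) (m : Fin n → ℝ) (hm : ∀ i, 0 < m i) :
    ∃ (c : ℂ) (α : Fin n → ℂ), ‖c‖ = 1 ∧ (∀ j, ‖α j‖ < 1) ∧
      (∀ z : ℂ, ‖z‖ < 1 →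
        ((∑ i, (m i : ℂ) * (lam i + z) / (lam i - z)) - 1) /
            ((∑ i, (m i : ℂ) * (lam i + z) / (lam i - z)) + 1) =
          c * ∏ j, (z - α j) / (1 - conj (α j) * z)) ∧
      (((∑ i, (m i : ℂ) * (lam i + 0) / (lam i - 0)) - 1) /
          ((∑ i, (m i : ℂ) * (lam i + 0) / (lam i - 0)) + 1)).im = 0 := by
  have hm0 : ∀ i, 0 ≤ m i := fun i => (hm i).le
  obtain ⟨α, hroot, hfac⟩ := exists_eval_eq_leadingCoeff_mul_prod_sub
    ((natDegree_num_add_den lam hm0).trans (Fintype.card_fin n))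
  rw [leadingCoeff_num_add_den lam hm0] at hfac
  have hsub := eval_num_sub_den hlam m (κ := Fin n) rfl hfac
  rw [Fintype.card_fin] at hsub
  have hlam0 : ∀ i, lam i ≠ 0 := fun i h => by simpa [h] using hlam i
  refine ⟨(-(-1) ^ n * ∏ i, lam i)⁻¹, α, ?_, fun j => norm_lt_one_of_isRoot hdist hlam hm (hroot j),
    fun z hz => ?_, ?_⟩
  · simp [norm_prod, hlam]
  · have hz' : ∀ i, lam i ≠ z := fun i h => by rw [← h, hlam] at hz; exact lt_irrefl _ hz
    show (transform lam m z - 1) / (transform lam m z + 1) = _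
    have ha : ((∑ i, m i + 1 : ℝ) : ℂ) ≠ 0 := by
      exact_mod_cast (add_pos_of_nonneg_of_pos (sum_nonneg fun i _ => hm0 i) one_pos).ne'
    rw [transform_sub_one_div_add_one m hz', hfac, hsub, prod_div_distrib]
    field_simp [ha]
  · show ((transform lam m 0 - 1) / (transform lam m 0 + 1)).im = 0
    rw [transform_zero hlam0]
    exact_mod_cast Complex.ofReal_im ((∑ i, m i - 1) / (∑ i, m i + 1))
end

section
/- Let B be a finite Blaschke product with N ≥ 2 zeros counted with multiplicity. Every extreme point of the convex set M of probability measures μ on 𝕋 satisfying the constraints ∫_𝕋 (w − α_j)^{-k} dμ(w) = 0 for each zero α_j ≠ 0 of multiplicity t_j and 1 ≤ k ≤ t_j, and ∫_𝕋 w^{-k} dμ(w) = 0 for 1 ≤ k ≤ t_0 − 1 (where t_0 is the multiplicity of the zero at 0), is an atomic measure supported at most 2N − 1 points. -/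
/-!
If the support of an extreme point `μ` of `M` contained `2N` points, choose disjoint open
neighbourhoods `U₁, …, U_{2N}` of them. The `2N` vectors `(μ Uᵢ, ∫_{Uᵢ} G dμ)`, where `G` collects
the `N - 1` complex constraint functions, lie in `ℝ × ℂ^{N-1}`, of real dimension `2N - 1`, so a
nonzero `y ∈ [-1, 1]^{2N}` annihilates them. For `h = ∑ yᵢ 1_{Uᵢ}` both measures `(1 ± h) μ` lie in
`M` and `μ` is their midpoint, so extremality forces `h = 0` `μ`-a.e., which is impossible since
`μ Uᵢ > 0`. Hence the support of `μ`, which carries `μ`, has at most `2N - 1` points.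
-/

open Finset MeasureTheory ComplexConjugate
open scoped NNReal ENNReal

namespace MeasureTheory.Measure

variable {α : Type*} [MeasurableSpace α] {μ : Measure α} {h : α → ℝ}

noncomputable def perturb (μ : Measure α) (h : α → ℝ) : Measure α :=
  μ.withDensity fun x => ENNReal.ofReal (1 + h x)

lemma perturb_absolutelyContinuous : μ.perturb h ≪ μ :=
  withDensity_absolutelyContinuous _ _

lemma perturb_add_perturb_neg (hh : Measurable h) (hbd : ∀ x, |h x| ≤ 1) :
    μ.perturb h + μ.perturb (-h) = (2 : ℝ≥0) • μ := by
  have hsum : ∀ x, ENNReal.ofReal (1 + h x) + ENNReal.ofReal (1 + (-h) x) = 2 := fun x => by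
    have := abs_le.1 (hbd x)
    rw [← ENNReal.ofReal_add (by linarith) (by simp; linarith), Pi.neg_apply,
      add_add_add_comm, add_neg_cancel, add_zero]
    norm_num
  rw [perturb, perturb, ← withDensity_add_left (hh.const_add 1).ennreal_ofReal,
    ENNReal.smul_def, ← withDensity_const]
  exact congrArg _ (funext hsum)

lemma integral_perturb [IsFiniteMeasure μ] {E : Type*} [NormedAddCommGroup E] [NormedSpace ℝ E]
    (hh : Measurable h) (hbd : ∀ x, |h x| ≤ 1) {G : α → E} (hG : Integrable G μ) :
    ∫ x, G x ∂μ.perturb h = ∫ x, G x ∂μ + ∫ x, h x • G x ∂μ := by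
  have hhG : Integrable (fun x => h x • G x) μ :=
    hG.bdd_smul 1 hh.aestronglyMeasurable (ae_of_all _ fun x => by simpa using hbd x)
  rw [perturb, integral_withDensity_eq_integral_toReal_smul (hh.const_add 1).ennreal_ofReal
    (ae_of_all _ fun _ => ENNReal.ofReal_lt_top), ← integral_add hG hhG]
  congr 1 with x
  rw [ENNReal.toReal_ofReal (by linarith [(abs_le.1 (hbd x)).1]), add_smul, one_smul]

lemma isProbabilityMeasure_perturb [IsProbabilityMeasure μ] (hh : Measurable h)
    (hbd : ∀ x, |h x| ≤ 1) (h0 : ∫ x, h x ∂μ = 0) : IsProbabilityMeasure (μ.perturb h) := by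
  have hint : Integrable h μ :=
    (integrable_const (1 : ℝ)).mono' hh.aestronglyMeasurable (ae_of_all _ hbd)
  constructor
  rw [perturb, withDensity_apply _ MeasurableSet.univ, Measure.restrict_univ,
    ← ofReal_integral_eq_lintegral_ofReal (f := fun x => 1 + h x) ((integrable_const 1).add hint)
      (ae_of_all _ fun x => by simp only [Pi.zero_apply]; linarith [(abs_le.1 (hbd x)).1]),
    integral_add (integrable_const 1) hint, h0]
  simp

lemma ae_eq_zero_of_perturb_eq_perturb_neg [IsFiniteMeasure μ] (hh : Measurable h)
    (hbd : ∀ x, |h x| ≤ 1) (heq : μ.perturb h = μ.perturb (-h)) : h =ᵐ[μ] 0 := by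
  rw [perturb, perturb, withDensity_eq_iff_of_sigmaFinite
    (hh.const_add 1).ennreal_ofReal.aemeasurable
    (hh.neg.const_add 1).ennreal_ofReal.aemeasurable] at heq
  filter_upwards [heq] with x hx
  have := abs_le.1 (hbd x)
  rw [ENNReal.ofReal_eq_ofReal_iff (by linarith) (by simp; linarith)] at hx
  simp only [Pi.neg_apply, Pi.zero_apply] at hx ⊢
  linarith

lemma ae_eq_zero_of_perturb_mem [IsFiniteMeasure μ] {M : Set (Measure α)}
    (hext : ∀ μ₁ ∈ M, ∀ μ₂ ∈ M, ∀ a : ℝ≥0, 0 < a → a < 1 →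
      μ = a • μ₁ + (1 - a) • μ₂ → μ₁ = μ₂)
    (hh : Measurable h) (hbd : ∀ x, |h x| ≤ 1) (hpos : μ.perturb h ∈ M)
    (hneg : μ.perturb (-h) ∈ M) : h =ᵐ[μ] 0 := by
  have hhalf : (1 - 2⁻¹ : ℝ≥0) = 2⁻¹ := by
    rw [← NNReal.coe_inj]
    norm_num
  refine ae_eq_zero_of_perturb_eq_perturb_neg hh hbd <|
    hext _ hpos _ hneg 2⁻¹ (by norm_num) (by norm_num) ?_
  rw [hhalf, ← smul_add, perturb_add_perturb_neg hh hbd, smul_smul,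
    inv_mul_cancel₀ two_ne_zero, one_smul]

end MeasureTheory.Measure

lemma exists_ne_zero_abs_le_one_sum_smul_eq_zero {ι V : Type*} [Fintype ι] [AddCommGroup V]
    [Module ℝ V] [FiniteDimensional ℝ V] (v : ι → V)
    (hcard : Module.finrank ℝ V < Fintype.card ι) :
    ∃ y : ι → ℝ, y ≠ 0 ∧ (∀ i, |y i| ≤ 1) ∧ ∑ i, y i • v i = 0 := by
  have hdep : ¬ LinearIndependent ℝ v := fun hv =>
    hcard.not_ge hv.fintype_card_le_finrank
  obtain ⟨c, hc, i, hci⟩ := Fintype.not_linearIndependent_iff.1 hdep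
  have hc0 : c ≠ 0 := fun h => hci (congrFun h i)
  refine ⟨‖c‖⁻¹ • c, smul_ne_zero (by simpa using hc0) hc0, fun j => ?_, ?_⟩
  · have hnorm : ‖‖c‖⁻¹ • c‖ = 1 := by
      rw [norm_smul, norm_inv, norm_norm, inv_mul_cancel₀ (norm_ne_zero_iff.2 hc0)]
    simpa [hnorm] using norm_le_pi_norm (‖c‖⁻¹ • c) j
  · simp only [Pi.smul_apply, smul_eq_mul, mul_smul, ← Finset.smul_sum, hc, smul_zero]

section StepFunction

open Function

variable {α ι : Type*} [Fintype ι] {U : ι → Set α}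

lemma sum_indicator_const_apply_of_mem {β : Type*} [AddCommMonoid β]
    (hU : Pairwise (Disjoint on U)) (c : ι → β) {i : ι} {x : α} (hx : x ∈ U i) :
    ∑ j, (U j).indicator (fun _ => c j) x = c i := by
  rw [Finset.sum_eq_single i (fun j _ hji => Set.indicator_of_notMem
    (Set.disjoint_left.1 (hU hji.symm) hx) _) (by simp), Set.indicator_of_mem hx]

lemma abs_sum_indicator_const_le_one (hU : Pairwise (Disjoint on U)) {c : ι → ℝ}
    (hc : ∀ i, |c i| ≤ 1) (x : α) : |∑ j, (U j).indicator (fun _ => c j) x| ≤ 1 := by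
  by_cases hx : ∃ i, x ∈ U i
  · obtain ⟨i, hi⟩ := hx
    rw [sum_indicator_const_apply_of_mem hU c hi]
    exact hc i
  · rw [not_exists] at hx
    simp [Set.indicator_of_notMem (hx _)]

end StepFunction

section Support

variable {α : Type*} [TopologicalSpace α] [MeasurableSpace α] {μ : Measure α}

lemma exists_finset_card_le_of_forall_subset_support [HereditarilyLindelofSpace α] {n : ℕ}
    (h : ∀ s : Finset α, ↑s ⊆ μ.support → s.card ≤ n) :
    ∃ s : Finset α, s.card ≤ n ∧ μ (↑s)ᶜ = 0 := by
  have hfin : μ.support.Finite := Set.not_infinite.1 fun hinf => by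
    obtain ⟨s, hs, hcard⟩ := hinf.exists_subset_card_eq (n + 1)
    have := h s hs
    omega
  exact ⟨hfin.toFinset, h _ (by simp), by simp⟩

open Function in
lemma exists_perturbation_of_subset_support [T2Space α] [OpensMeasurableSpace α]
    [IsFiniteMeasure μ] {E : Type*} [NormedAddCommGroup E] [NormedSpace ℝ E]
    [FiniteDimensional ℝ E] {G : α → E} (hG : Integrable G μ) {s : Finset α}
    (hs : ↑s ⊆ μ.support) (hcard : Module.finrank ℝ E + 1 < s.card) :
    ∃ h : α → ℝ, Measurable h ∧ (∀ x, |h x| ≤ 1) ∧ ∫ x, h x ∂μ = 0 ∧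
      ∫ x, h x • G x ∂μ = 0 ∧ ¬ h =ᵐ[μ] 0 := by
  obtain ⟨U, hU, hUd⟩ := s.finite_toSet.t2_separation
  set B : s → Set α := fun x => U x
  have hBd : Pairwise (Disjoint on B) := fun x y hxy =>
    hUd x.2 y.2 (Subtype.coe_injective.ne hxy)
  have hBm : ∀ x, MeasurableSet (B x) := fun x => (hU x).2.measurableSet
  have hBpos : ∀ x, μ (B x) ≠ 0 := fun x =>
    ((Measure.mem_support_iff_forall _).1 (hs x.2) _ ((hU x).2.mem_nhds (hU x).1)).ne'
  obtain ⟨y, hy0, hy1, hy⟩ := exists_ne_zero_abs_le_one_sum_smul_eq_zero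
    (fun x => (μ.real (B x), ∫ w in B x, G w ∂μ))
    (by rwa [Module.finrank_prod, Module.finrank_self, add_comm, Fintype.card_coe])
  set h : α → ℝ := fun w => ∑ x, (B x).indicator (fun _ => y x) w
  have hsmul : ∀ w, h w • G w = ∑ x, (B x).indicator (fun w => y x • G w) w := fun w => by
    simp only [h, Finset.sum_smul, Set.indicator_smul_apply_left]
  refine ⟨h, Finset.measurable_sum _ fun x _ => measurable_const.indicator (hBm x),
    abs_sum_indicator_const_le_one hBd hy1, ?_, ?_, ?_⟩
  · rw [integral_finsetSum _ fun x _ => (integrable_const _).indicator (hBm x)]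
    simpa only [integral_indicator_const _ (hBm _), smul_eq_mul, mul_comm, Prod.fst_sum,
      Prod.smul_fst, Prod.fst_zero] using congrArg Prod.fst hy
  · simp only [hsmul]
    rw [integral_finsetSum (f := fun x w => (B x).indicator (fun w => y x • G w) w) _
      fun x _ => (hG.smul (y x)).indicator (hBm x)]
    simpa only [integral_indicator (hBm _), integral_smul, Prod.snd_sum, Prod.smul_snd,
      Prod.snd_zero] using congrArg Prod.snd hy
  · intro hae
    obtain ⟨x, hx⟩ := Function.ne_iff.1 hy0
    obtain ⟨w, hw, hw0⟩ := Measure.exists_mem_of_measure_ne_zero_of_ae (hBpos x)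
      (ae_restrict_of_ae hae)
    exact hx ((sum_indicator_const_apply_of_mem hBd y hw).symm.trans hw0)

theorem exists_finset_card_le_finrank_add_one_of_extreme [T2Space α]
    [HereditarilyLindelofSpace α] [OpensMeasurableSpace α] [IsProbabilityMeasure μ]
    {E : Type*} [NormedAddCommGroup E] [NormedSpace ℝ E] [FiniteDimensional ℝ E]
    {G : α → E} (hG : Integrable G μ) {M : Set (Measure α)}
    (hM : ∀ ν, IsProbabilityMeasure ν → ν ≪ μ → ∫ x, G x ∂ν = ∫ x, G x ∂μ → ν ∈ M)
    (hext : ∀ μ₁ ∈ M, ∀ μ₂ ∈ M, ∀ a : ℝ≥0, 0 < a → a < 1 →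
      μ = a • μ₁ + (1 - a) • μ₂ → μ₁ = μ₂) :
    ∃ s : Finset α, s.card ≤ Module.finrank ℝ E + 1 ∧ μ (↑s)ᶜ = 0 := by
  refine exists_finset_card_le_of_forall_subset_support fun s hs => ?_
  by_contra! hcard
  obtain ⟨h, hh, hbd, h0, hG0, hne⟩ := exists_perturbation_of_subset_support hG hs hcard
  have perturb_mem : ∀ k : α → ℝ, Measurable k → (∀ x, |k x| ≤ 1) → ∫ x, k x ∂μ = 0 →
      ∫ x, k x • G x ∂μ = 0 → μ.perturb k ∈ M := fun k hk hkb hk0 hkG =>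
    hM _ (Measure.isProbabilityMeasure_perturb hk hkb hk0)
      Measure.perturb_absolutelyContinuous
      (by rw [Measure.integral_perturb hk hkb hG, hkG, add_zero])
  refine hne (Measure.ae_eq_zero_of_perturb_mem hext hh hbd
    (perturb_mem h hh hbd h0 hG0) (perturb_mem (-h) hh.neg (by simpa using hbd) ?_ ?_))
  · simp [integral_neg, h0]
  · simp [neg_smul, integral_neg, hG0]

end Support

lemma integrable_inv_sub_pow {μ : Measure ℂ} [IsFiniteMeasure μ] (hμ : ∀ᵐ w ∂μ, ‖w‖ = 1)
    {a : ℂ} (ha : ‖a‖ < 1) (k : ℕ) : Integrable (fun w => ((w - a) ^ k)⁻¹) μ := by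
  have hgap : 0 < 1 - ‖a‖ := sub_pos.2 ha
  refine (integrable_const ((1 - ‖a‖) ^ k)⁻¹).mono'
    ((measurable_id.sub_const a).pow_const k).inv.aestronglyMeasurable ?_
  filter_upwards [hμ] with w hw
  rw [norm_inv, norm_pow]
  refine inv_anti₀ (pow_pos hgap k) (pow_le_pow_left₀ hgap.le ?_ k)
  linarith [norm_sub_norm_le w a]

lemma forall_fin_add_one_iff {n : ℕ} {P : ℕ → Prop} :
    (∀ l : Fin n, P (l + 1)) ↔ ∀ k, 1 ≤ k → k ≤ n → P k :=
  ⟨fun h k hk1 hkn => Nat.sub_add_cancel hk1 ▸ h ⟨k - 1, by omega⟩,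
    fun h l => h _ (Nat.le_add_left 1 l) l.2⟩

/-- The constraint functions defining `M`; the exponent `k` sits at index `k - 1`. -/
noncomputable def constraintMap {m : ℕ} (α : Fin m → ℂ) (t : Fin m → ℕ) (t0 : ℕ) (w : ℂ) :
    (Σ j : Fin m, Fin (t j)) ⊕ Fin (t0 - 1) → ℂ :=
  Sum.elim (fun jl => ((w - α jl.1) ^ (jl.2.val + 1))⁻¹) (fun l => (w ^ (l.val + 1))⁻¹)

section ConstraintMap

variable {m : ℕ} {α : Fin m → ℂ} {t : Fin m → ℕ} {t0 : ℕ} {μ : Measure ℂ} [IsFiniteMeasure μ]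

lemma integrable_constraintMap (hμ : ∀ᵐ w ∂μ, ‖w‖ = 1) (hα : ∀ j, ‖α j‖ < 1) :
    Integrable (constraintMap α t t0) μ := by
  refine integrable_pi_iff.2 ?_
  rintro (⟨j, l⟩ | l)
  · exact integrable_inv_sub_pow hμ (hα j) _
  · simpa [constraintMap] using integrable_inv_sub_pow hμ (a := 0) (by simp) (l.val + 1)

lemma integral_constraintMap_eq_zero_iff (hμ : ∀ᵐ w ∂μ, ‖w‖ = 1) (hα : ∀ j, ‖α j‖ < 1) :
    ∫ w, constraintMap α t t0 w ∂μ = 0 ↔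
      (∀ j, ∀ k, 1 ≤ k → k ≤ t j → ∫ w, ((w - α j) ^ k)⁻¹ ∂μ = 0) ∧
      (∀ k, 1 ≤ k → k ≤ t0 - 1 → ∫ w, (w ^ k)⁻¹ ∂μ = 0) := by
  have heval := eval_integral
    (integrable_pi_iff.1 (integrable_constraintMap (t := t) (t0 := t0) hμ hα))
  simp only [funext_iff, heval, Pi.zero_apply]
  simp only [Sum.forall, Sigma.forall, constraintMap, Sum.elim_inl, Sum.elim_inr]
  exact and_congr (forall_congr' fun j =>
      forall_fin_add_one_iff (P := fun k => ∫ w, ((w - α j) ^ k)⁻¹ ∂μ = 0))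
    (forall_fin_add_one_iff (P := fun k => ∫ w, (w ^ k)⁻¹ ∂μ = 0))

end ConstraintMap

theorem stmt12_general (N : ℕ) (t0 : ℕ) (ht0 : 1 ≤ t0) (m : ℕ)
    (α : Fin m → ℂ)
    (hα : ∀ j, ‖α j‖ < 1 ∧ α j ≠ 0)
    (t : Fin m → ℕ) (hsum : t0 + ∑ j, t j = N)
    (M : Set (Measure ℂ))
    (hM : M = {μ : Measure ℂ | IsProbabilityMeasure μ ∧ μ {w : ℂ | ‖w‖ ≠ 1} = 0 ∧
      (∀ j, ∀ k, 1 ≤ k → k ≤ t j → (∫ w, ((w - α j) ^ k)⁻¹ ∂μ) = 0) ∧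
      (∀ k, 1 ≤ k → k ≤ t0 - 1 → (∫ w, (w ^ k)⁻¹ ∂μ) = 0)})
    (μ : Measure ℂ) (hμ : μ ∈ M)
    (hext : ∀ μ₁ ∈ M, ∀ μ₂ ∈ M, ∀ a : ℝ≥0, 0 < a → a < 1 →
      μ = a • μ₁ + (1 - a) • μ₂ → μ₁ = μ₂) :
    ∃ s : Finset ℂ, s.card ≤ 2 * N - 1 ∧ μ (↑s)ᶜ = 0 := by
  subst hM
  obtain ⟨hprob, hnull, hmoments⟩ := hμ
  have hcirc : ∀ᵐ w ∂μ, ‖w‖ = 1 := ae_iff.2 hnull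
  have hα' : ∀ j, ‖α j‖ < 1 := fun j => (hα j).1
  have hdim :
      Module.finrank ℝ ((Σ j : Fin m, Fin (t j)) ⊕ Fin (t0 - 1) → ℂ) + 1 = 2 * N - 1 := by
    simp only [Module.finrank_pi_fintype, Complex.finrank_real_complex, Finset.sum_const,
      Finset.card_univ, Fintype.card_sum, Fintype.card_sigma, Fintype.card_fin, smul_eq_mul]
    omega
  rw [← hdim]
  refine exists_finset_card_le_finrank_add_one_of_extreme
    (integrable_constraintMap (t := t) (t0 := t0) hcirc hα') (fun ν hν hνμ hνG => ?_) hext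
  have hνcirc : ∀ᵐ w ∂ν, ‖w‖ = 1 := hνμ.ae_le hcirc
  refine ⟨hν, hνμ hnull, (integral_constraintMap_eq_zero_iff hνcirc hα').1 ?_⟩
  rw [hνG, integral_constraintMap_eq_zero_iff hcirc hα']
  exact hmoments

theorem stmt12 (N : ℕ) (hN : 2 ≤ N) (t0 : ℕ) (ht0 : 1 ≤ t0) (m : ℕ)
    (α : Fin m → ℂ) (hαd : Function.Injective α)
    (hα : ∀ j, ‖α j‖ < 1 ∧ α j ≠ 0)
    (t : Fin m → ℕ) (ht : ∀ j, 1 ≤ t j) (hsum : t0 + ∑ j, t j = N)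
    (M : Set (Measure ℂ))
    (hM : M = {μ : Measure ℂ | IsProbabilityMeasure μ ∧ μ {w : ℂ | ‖w‖ ≠ 1} = 0 ∧
      (∀ j, ∀ k, 1 ≤ k → k ≤ t j → (∫ w, ((w - α j) ^ k)⁻¹ ∂μ) = 0) ∧
      (∀ k, 1 ≤ k → k ≤ t0 - 1 → (∫ w, (w ^ k)⁻¹ ∂μ) = 0)})
    (μ : Measure ℂ) (hμ : μ ∈ M)
    (hext : ∀ μ₁ ∈ M, ∀ μ₂ ∈ M, ∀ a : ℝ≥0, 0 < a → a < 1 →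
      μ = a • μ₁ + (1 - a) • μ₂ → μ₁ = μ₂) :
    ∃ s : Finset ℂ, s.card ≤ 2 * N - 1 ∧ μ (↑s)ᶜ = 0 :=
  stmt12_general N t0 ht0 m α hα t hsum M hM μ hμ hext
end

section
/- Let B be a finite Blaschke product with N ≥ 2 zeros counted with multiplicity. Every extreme point of the convex set M of constrained probability measures (as in the Herglotz representation of functions φ ∈ ℂ + B·A(𝔻) with φ(0)=0) is an atomic measure supported at least N points. Equivalently, if μ ∈ M is supported at n points then n ≥ N. -/
/-!
Suppose `μ` is carried by a set `S` of fewer than `N` points of the circle. Let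
`P = X^(t₀-1) ∏ⱼ (X - αⱼ)^(tⱼ)`, of degree `N - 1`, and let `Q` be a monic polynomial of the same
degree vanishing on `S`. Then `(P - Q) / P` is identically `1` on `S`, while by partial fractions it
is a linear combination of the functions `(w - αⱼ)^(-k)`, `1 ≤ k ≤ tⱼ`, and `w^(-k)`,
`1 ≤ k ≤ t₀ - 1`, whose `μ`-integrals vanish. Hence `μ(𝕋) = 0`, which is absurd for a probability
measure.
-/

open Finset MeasureTheory ComplexConjugate
open Polynomial

section PartialFractions

variable {K ι : Type*} [Field K] [Fintype ι]

theorem degree_prod_X_sub_C_pow (β : ι → K) (e : ι → ℕ) :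
    (∏ i, (X - C (β i)) ^ e i).degree = ↑(∑ i, e i) := by
  simp [degree_prod]

variable [DecidableEq ι]

theorem natDegree_C_mul_X_sub_C_pow_mul_prod_erase_lt (β : ι → K) (e : ι → ℕ) (c : K) {i : ι}
    {j : ℕ} (hj : j < e i) :
    (C c * (X - C (β i)) ^ j * ∏ k ∈ univ.erase i, (X - C (β k)) ^ e k).natDegree
      < ∑ k, e k := by
  have hprod : (∏ k ∈ univ.erase i, (X - C (β k)) ^ e k).natDegree ≤ ∑ k ∈ univ.erase i, e k :=
    (natDegree_prod_le _ _).trans (by simp)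
  have hpow : ((X - C (β i)) ^ j).natDegree ≤ j := by simp
  have hC : (C c).natDegree = 0 := natDegree_C c
  calc (C c * (X - C (β i)) ^ j * ∏ k ∈ univ.erase i, (X - C (β k)) ^ e k).natDegree
      ≤ (C c).natDegree + ((X - C (β i)) ^ j).natDegree
        + (∏ k ∈ univ.erase i, (X - C (β k)) ^ e k).natDegree :=
        natDegree_mul_le.trans (Nat.add_le_add_right natDegree_mul_le _)
    _ < e i + ∑ k ∈ univ.erase i, e k := by omega
    _ = ∑ k, e k := add_sum_erase _ _ (mem_univ i)

theorem exists_eval_div_prod_X_sub_C_pow_eq_sum {β : ι → K} (hβ : Function.Injective β)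
    (e : ι → ℕ) {R : K[X]} (hR : R.degree < ↑(∑ i, e i)) :
    ∃ c : (i : ι) → Fin (e i) → K, ∀ w, (∀ i, w ≠ β i) →
      R.eval w / ∏ i, (w - β i) ^ e i = ∑ i, ∑ j : Fin (e i), c i j / (w - β i) ^ (e i - j) := by
  obtain ⟨q, r, hr, hR_eq⟩ := eq_quo_mul_prod_pow_add_sum_rem_mul_prod_pow (s := univ) R
    (g := fun i => X - C (β i)) (fun i _ => monic_X_sub_C _)
    (fun i _ j _ hij => pairwise_coprime_X_sub_C hβ hij) e
  have hr_eq_C : ∀ i j, r i j = C ((r i j).coeff 0) := fun i j =>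
    eq_C_of_degree_le_zero (Nat.WithBot.lt_one_iff_le_zero.1 <| by simpa using hr i (mem_univ i) j)
  set T := ∑ i, ∑ j : Fin (e i), r i j * (X - C (β i)) ^ j.1 *
    ∏ k ∈ univ.erase i, (X - C (β k)) ^ e k
  have hT : T.degree < ↑(∑ i, e i) := by
    refine (degree_sum_le _ _).trans_lt <| (Finset.sup_lt_iff (WithBot.bot_lt_coe _)).2
      fun i _ => (degree_sum_le _ _).trans_lt <| (Finset.sup_lt_iff (WithBot.bot_lt_coe _)).2
      fun j _ => degree_le_natDegree.trans_lt <| WithBot.coe_lt_coe.2 ?_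
    rw [hr_eq_C]
    exact natDegree_C_mul_X_sub_C_pow_mul_prod_erase_lt β e _ j.2
  have hq : q = 0 := by
    have hqP : q * ∏ i, (X - C (β i)) ^ e i = R - T := by rw [hR_eq]; ring
    have hdeg : (q * ∏ i, (X - C (β i)) ^ e i).degree < (∏ i, (X - C (β i)) ^ e i).degree := by
      rw [hqP, degree_prod_X_sub_C_pow]
      exact (degree_sub_le _ _).trans_lt (max_lt hR hT)
    exact (mul_eq_zero.1 (eq_zero_of_dvd_of_degree_lt (dvd_mul_left _ q) hdeg)).resolve_right
      (monic_prod_of_monic _ _ fun i _ => (monic_X_sub_C _).pow _).ne_zero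
  refine ⟨fun i j => (r i j).coeff 0, fun w hw => ?_⟩
  rw [hR_eq, hq, zero_mul, zero_add, eval_finsetSum, sum_div]
  refine sum_congr rfl fun i _ => ?_
  rw [eval_finsetSum, sum_div]
  refine sum_congr rfl fun j _ => ?_
  rw [hr_eq_C, ← mul_prod_erase univ _ (mem_univ i)]
  simp only [eval_mul, eval_C, eval_pow, eval_sub, eval_X, eval_prod]
  have hwi : w - β i ≠ 0 := sub_ne_zero.2 (hw i)
  have hprod : ∏ k ∈ univ.erase i, (w - β k) ^ e k ≠ 0 :=
    prod_ne_zero_iff.2 fun k _ => pow_ne_zero _ (sub_ne_zero.2 (hw k))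
  rw [← pow_sub_mul_pow _ j.2.le]
  field_simp

end PartialFractions

theorem integral_eq_sum_of_measure_compl_finset_eq_zero {α E : Type*} [MeasurableSpace α]
    [MeasurableSingletonClass α] [NormedAddCommGroup E] [NormedSpace ℝ E] [CompleteSpace E]
    {μ : Measure α} [IsFiniteMeasure μ] {s : Finset α} (hs : μ (↑s)ᶜ = 0) (f : α → E) :
    ∫ x, f x ∂μ = ∑ x ∈ s, μ.real {x} • f x := by
  rw [← setIntegral_finset s IntegrableOn.finset, Measure.restrict_eq_self_of_ae_mem (ae_iff.2 hs)]

theorem measure_eq_zero_of_integral_inv_pow_eq_zero {ι : Type*} [Fintype ι] {β : ι → ℂ}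
    (hβ : Function.Injective β) (e : ι → ℕ) {μ : Measure ℂ} [IsFiniteMeasure μ] {s : Finset ℂ}
    (hs : μ (↑s)ᶜ = 0) (hsβ : ∀ z ∈ s, ∀ i, z ≠ β i) (hcard : #s ≤ ∑ i, e i)
    (hμ : ∀ i k, 1 ≤ k → k ≤ e i → ∫ w, ((w - β i) ^ k)⁻¹ ∂μ = 0) :
    μ = 0 := by
  classical
  set P : ℂ[X] := ∏ i, (X - C (β i)) ^ e i
  set Q : ℂ[X] := X ^ (∑ i, e i - #s) * ∏ z ∈ s, (X - C z)
  have hP : P.Monic := monic_prod_of_monic _ _ fun i _ => (monic_X_sub_C _).pow _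
  have hQ : Q.Monic := (monic_X_pow _).mul (monic_prod_of_monic _ _ fun z _ => monic_X_sub_C z)
  have hPQ : P.degree = Q.degree := by
    refine (degree_prod_X_sub_C_pow β e).trans ?_
    simp only [Q, degree_mul, degree_X_pow, degree_prod, degree_X_sub_C, sum_const,
      nsmul_eq_mul, mul_one]
    norm_cast
    omega
  obtain ⟨c, hc⟩ := exists_eval_div_prod_X_sub_C_pow_eq_sum hβ e (R := P - Q) <| by
    rw [← degree_prod_X_sub_C_pow β e]
    exact degree_sub_lt_left hPQ hP.ne_zero (hP.leadingCoeff.trans hQ.leadingCoeff.symm)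
  have hc_one : ∀ z ∈ s, ∑ i, ∑ j : Fin (e i), c i j / (z - β i) ^ (e i - j) = 1 := by
    intro z hz
    have hQz : Q.eval z = 0 := by
      simp [Q, eval_prod, prod_eq_zero hz]
    have hPz : P.eval z = ∏ i, (z - β i) ^ e i := by simp [P, eval_prod]
    rw [← hc z (hsβ z hz), eval_sub, hQz, sub_zero, hPz, div_self]
    exact prod_ne_zero_iff.2 fun i _ => pow_ne_zero _ (sub_ne_zero.2 (hsβ z hz i))
  have hsum_zero : ∀ i (j : Fin (e i)),
      ∑ z ∈ s, (μ.real {z} : ℂ) * ((z - β i) ^ (e i - j))⁻¹ = 0 := by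
    intro i j
    simp only [← Complex.real_smul, ← integral_eq_sum_of_measure_compl_finset_eq_zero hs]
    exact hμ i _ (by omega) (by omega)
  have hmass : μ.real Set.univ = ∑ z ∈ s, μ.real {z} := by
    simpa using integral_eq_sum_of_measure_compl_finset_eq_zero hs (fun _ => (1 : ℝ))
  have hmass_zero : (μ.real Set.univ : ℂ) = 0 := calc
    (μ.real Set.univ : ℂ)
        = ∑ z ∈ s, (μ.real {z} : ℂ) * ∑ i, ∑ j : Fin (e i), c i j / (z - β i) ^ (e i - j) := by
      rw [hmass, Complex.ofReal_sum]
      exact sum_congr rfl fun z hz => by rw [hc_one z hz, mul_one]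
    _ = ∑ i, ∑ j : Fin (e i),
          c i j * ∑ z ∈ s, (μ.real {z} : ℂ) * ((z - β i) ^ (e i - j))⁻¹ := by
      simp only [mul_sum]
      rw [sum_comm]
      refine sum_congr rfl fun i _ => ?_
      rw [sum_comm]
      exact sum_congr rfl fun j _ => sum_congr rfl fun z _ => by ring
    _ = 0 := by simp [hsum_zero]
  rw [← Measure.measure_univ_eq_zero, ← measureReal_eq_zero_iff]
  exact_mod_cast hmass_zero

theorem stmt13_general (N : ℕ) (t0 : ℕ) (m : ℕ)
    (α : Fin m → ℂ) (hαd : Function.Injective α)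
    (hα : ∀ j, ‖α j‖ < 1 ∧ α j ≠ 0)
    (t : Fin m → ℕ) (hsum : t0 + ∑ j, t j = N)
    (μ : Measure ℂ) (hprob : IsProbabilityMeasure μ)
    (hcirc : μ {w : ℂ | ‖w‖ ≠ 1} = 0)
    (hconstr : ∀ j, ∀ k, 1 ≤ k → k ≤ t j → (∫ w, ((w - α j) ^ k)⁻¹ ∂μ) = 0)
    (hconstr0 : ∀ k, 1 ≤ k → k ≤ t0 - 1 → (∫ w, (w ^ k)⁻¹ ∂μ) = 0) :
    ∀ s : Finset ℂ, μ (↑s)ᶜ = 0 → N ≤ s.card := by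
  intro s hs
  by_contra! hcard
  set β : Fin (m + 1) → ℂ := Fin.cons 0 α
  set e : Fin (m + 1) → ℕ := Fin.cons (t0 - 1) t
  set s₁ := s.filter (‖·‖ = 1)
  have hβ : Function.Injective β :=
    Fin.cons_injective_iff.2 ⟨fun ⟨j, hj⟩ => (hα j).2 hj, hαd⟩
  have hs₁ : μ (↑s₁)ᶜ = 0 := measure_mono_null (fun z hz => by
      by_cases hzs : z ∈ s
      · exact Or.inr fun h => hz (mem_filter.2 ⟨hzs, h⟩)
      · exact Or.inl hzs) (measure_union_null hs hcirc)
  have hs₁β : ∀ z ∈ s₁, ∀ i, z ≠ β i := by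
    intro z hz i hzi
    have hβ_lt : ‖β i‖ < 1 := Fin.cases (by simp [β]) (fun j => by simpa [β] using (hα j).1) i
    exact hβ_lt.ne (hzi ▸ (mem_filter.1 hz).2)
  have hcard₁ : #s₁ ≤ ∑ i, e i := by
    have : #s₁ ≤ #s := card_filter_le _ _
    simp only [e, Fin.sum_cons]
    omega
  have hμ : ∀ i k, 1 ≤ k → k ≤ e i → ∫ w, ((w - β i) ^ k)⁻¹ ∂μ = 0 := by
    refine Fin.cases (fun k hk hke => ?_) (fun j k hk hke => ?_)
    · simpa [β] using hconstr0 k hk hke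
    · simpa [β] using hconstr j k hk hke
  exact IsProbabilityMeasure.ne_zero μ
    (measure_eq_zero_of_integral_inv_pow_eq_zero hβ e hs₁ hs₁β hcard₁ hμ)

theorem stmt13 (N : ℕ) (hN : 2 ≤ N) (t0 : ℕ) (ht0 : 1 ≤ t0) (m : ℕ)
    (α : Fin m → ℂ) (hαd : Function.Injective α)
    (hα : ∀ j, ‖α j‖ < 1 ∧ α j ≠ 0)
    (t : Fin m → ℕ) (ht : ∀ j, 1 ≤ t j) (hsum : t0 + ∑ j, t j = N)
    (μ : Measure ℂ) (hprob : IsProbabilityMeasure μ)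
    (hcirc : μ {w : ℂ | ‖w‖ ≠ 1} = 0)
    (hconstr : ∀ j, ∀ k, 1 ≤ k → k ≤ t j → (∫ w, ((w - α j) ^ k)⁻¹ ∂μ) = 0)
    (hconstr0 : ∀ k, 1 ≤ k → k ≤ t0 - 1 → (∫ w, (w ^ k)⁻¹ ∂μ) = 0) :
    ∀ s : Finset ℂ, μ (↑s)ᶜ = 0 → N ≤ s.card :=
  stmt13_general N t0 m α hαd hα t hsum μ hprob hcirc hconstr hconstr0
end

section
/- Let A : S × S → M_2(ℂ) be a positive-semidefinite kernel on a finite set S (i.e., the block matrix (A(z,w))_{z,w∈S} is PSD) such that A(z,w) = I_2 whenever z ∈ S₀ or w ∈ S₀, for some nonempty subset S₀ ⊆ S. Then the kernel A − [I], defined by (A(z,w) − I_2)_{z,w∈S}, is also positive semidefinite. -/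
/-!
Let `P` be the matrix whose `(w, i)` column is `e_(w,i) - e_(z₀,i)`. Conjugating a block kernel
`K` by `P` gives the kernel `K z w - K z z₀ - K z₀ w + K z₀ z₀`, which is again positive
semidefinite. When every block in the row and column of `z₀` is the identity, this kernel is
`K z w - 1`.
-/

open scoped ComplexOrder

namespace Matrix

variable {S ι R : Type*} [Fintype S] [DecidableEq S] [Fintype ι] [DecidableEq ι]

def blockCentering [Ring R] (z₀ : S) : Matrix (S × ι) (S × ι) R :=
  of fun u q => (if u = q then 1 else 0) - (if u = (z₀, q.2) then 1 else 0)

theorem comp_mul_blockCentering [Ring R] (K : Matrix S S (Matrix ι ι R)) (z₀ : S) :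
    comp S S ι ι R K * blockCentering z₀ = comp S S ι ι R (of fun z w => K z w - K z z₀) := by
  ext p q
  simp [mul_apply, blockCentering, mul_sub, Finset.sum_sub_distrib]

theorem conjTranspose_blockCentering_mul_comp [Ring R] [StarRing R]
    (K : Matrix S S (Matrix ι ι R)) (z₀ : S) :
    (blockCentering z₀)ᴴ * comp S S ι ι R K = comp S S ι ι R (of fun z w => K z w - K z₀ w) := by
  ext p q
  simp [mul_apply, blockCentering, sub_mul, Finset.sum_sub_distrib, apply_ite star, eq_comm]

theorem PosSemidef.comp_centerAt [Ring R] [PartialOrder R] [StarRing R] [StarOrderedRing R]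
    {K : Matrix S S (Matrix ι ι R)} (hK : (comp S S ι ι R K).PosSemidef) (z₀ : S) :
    (comp S S ι ι R (of fun z w => K z w - K z z₀ - (K z₀ w - K z₀ z₀))).PosSemidef := by
  have h := hK.conjTranspose_mul_mul_same (blockCentering z₀)
  rw [Matrix.mul_assoc, comp_mul_blockCentering, conjTranspose_blockCentering_mul_comp] at h
  simpa only [of_apply] using h

end Matrix

theorem stmt18 (S : Type*) [Fintype S] [DecidableEq S]
    (A : S → S → Matrix (Fin 2) (Fin 2) ℂ)
    (hA : Matrix.PosSemidef (Matrix.of (fun p q : S × Fin 2 => A p.1 q.1 p.2 q.2)))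
    (S0 : Set S) (hS0 : S0.Nonempty)
    (hI : ∀ z w, z ∈ S0 ∨ w ∈ S0 → A z w = 1) :
    Matrix.PosSemidef (Matrix.of (fun p q : S × Fin 2 => (A p.1 q.1 - 1) p.2 q.2)) := by
  obtain ⟨z₀, hz₀⟩ := hS0
  have h := hA.comp_centerAt (K := Matrix.of A) z₀
  simp only [Matrix.of_apply, hI _ z₀ (.inr hz₀), hI z₀ _ (.inl hz₀), sub_self, sub_zero] at h
  exact h
end

section
/- Let ν be a positive M_2(ℂ)-valued Borel measure on a compact metric space X such that for every γ ∈ ℂ², the scalar measure ν_γ(E) = γ* ν(E) γ is a nonnegative combination of at most n point masses. Then there exist points x_1,…,x_n ∈ X (not necessarily distinct) and positive semidefinite matrices Q_1,…,Q_n ∈ M_2(ℂ) such that ν = ∑_{j=1}^n δ_{x_j} Q_j. -/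
/-! The diagonal measures `ν₁₁`, `ν₂₂` are combinations of finitely many point masses, and a
positive semidefinite matrix with zero diagonal vanishes, so `ν` is carried by the finite set `S`
of their atoms: `ν E = ∑_{p ∈ S ∩ E} ν {p}`. A vector `γ` outside the kernels of the finitely many
nonzero atoms `ν {p}` makes each of them an atom of `ν_γ`, so there are at most `n` of them. -/

open MeasureTheory Finset
open scoped ComplexOrder

namespace Matrix

variable {n 𝕜 : Type*} [Fintype n] [RCLike 𝕜]

lemma PosSemidef.eq_zero_of_diag_eq_zero {A : Matrix n n 𝕜} (hA : A.PosSemidef)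
    (h : ∀ i, A i i = 0) : A = 0 :=
  hA.trace_eq_zero_iff.mp (sum_eq_zero fun i _ => h i)

lemma apply_self_eq_star_dotProduct_mulVec [DecidableEq n] (A : Matrix n n 𝕜) (i : n) :
    A i i = star (Pi.single i 1 : n → 𝕜) ⬝ᵥ A *ᵥ Pi.single i 1 := by
  simp

lemma exists_forall_star_dotProduct_mulVec_ne_zero {ι : Type*} [Finite ι]
    {Q : ι → Matrix n n 𝕜} (hQ : ∀ i, (Q i).PosSemidef) (hne : ∀ i, Q i ≠ 0) :
    ∃ γ : n → 𝕜, ∀ i, star γ ⬝ᵥ Q i *ᵥ γ ≠ 0 := by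
  by_contra! h
  have hcover : ⋃ i, (LinearMap.ker (Q i).mulVecLin : Set (n → 𝕜)) = Set.univ :=
    Set.eq_univ_of_forall fun γ => by
      obtain ⟨i, hi⟩ := h γ
      exact Set.mem_iUnion.mpr ⟨i, ((hQ i).dotProduct_mulVec_zero_iff γ).mp hi⟩
  obtain ⟨i, hi⟩ := Subspace.exists_eq_top_of_iUnion_eq_univ hcover
  classical
  refine hne i (ext_of_mulVec_single fun j => ?_)
  rw [zero_mulVec]
  exact LinearMap.congr_fun (LinearMap.ker_eq_top.mp hi) (Pi.single j 1)

end Matrix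

namespace MeasureTheory.VectorMeasure

variable {X M : Type*} [MeasurableSpace X] [MeasurableSingletonClass X] [AddCommMonoid M]
  [TopologicalSpace M] [T2Space M]

lemma eq_sum_indicator_of_forall_disjoint (ν : VectorMeasure X M) (S : Finset X)
    (hS : ∀ E, MeasurableSet E → Disjoint E S → ν E = 0) {E : Set X} (hE : MeasurableSet E) :
    ν E = ∑ p ∈ S, E.indicator (fun _ => ν {p}) p := by
  classical
  have hES : E ∩ S = ⋃ p ∈ S.filter (· ∈ E), {p} := by ext; simp [and_comm]
  have hmeas : MeasurableSet (E ∩ S) := hE.inter S.finite_toSet.measurableSet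
  calc ν E = ν (E ∩ S) + ν (E \ (E ∩ S)) := (ν.of_add_of_sdiff hmeas hE Set.inter_subset_left).symm
    _ = ∑ p ∈ S.filter (· ∈ E), ν {p} := by
      rw [hS _ (hE.diff hmeas) (by simp [Set.disjoint_left]), add_zero, hES,
        ν.of_biUnion_finset (fun p _ q _ hpq => Set.disjoint_singleton.mpr hpq)
          fun p _ => measurableSet_singleton p]
    _ = ∑ p ∈ S, E.indicator (fun _ => ν {p}) p := by
      rw [sum_filter]; rfl

end MeasureTheory.VectorMeasure

lemma Finset.exists_fin_sum_indicator_eq {X M : Type*} [AddCommMonoid M] [Nonempty X]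
    (P : M → Prop) (h0 : P 0) (T : Finset X) (f : X → M) (hf : ∀ p ∈ T, P (f p)) {n : ℕ}
    (hn : T.card ≤ n) :
    ∃ (x : Fin n → X) (Q : Fin n → M), (∀ j, P (Q j)) ∧ ∀ E : Set X,
      ∑ p ∈ T, E.indicator (fun _ => f p) p = ∑ j, E.indicator (fun _ => Q j) (x j) := by
  obtain ⟨m, rfl⟩ := Nat.exists_eq_add_of_le hn
  let e : Fin T.card → X := fun i => T.equivFin.symm i
  refine ⟨Fin.append e fun _ => Classical.arbitrary X, Fin.append (f ∘ e) 0,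
    Fin.addCases (fun i => by simpa using hf _ (T.equivFin.symm i).2) fun _ => by simpa using h0,
    fun E => ?_⟩
  rw [Fin.sum_univ_add]
  simp only [Fin.append_left, Fin.append_right, Function.comp_apply, Pi.zero_apply,
    Set.indicator_zero, sum_const_zero, add_zero]
  rw [← sum_coe_sort T]
  exact (T.equivFin.symm.sum_comp fun p : T => E.indicator (fun _ => f p) (p : X)).symm

open Matrix

theorem stmt19_general (X : Type*) [MetricSpace X] [Nonempty X]
    [MeasurableSpace X] [BorelSpace X] (n : ℕ)
    (ν : VectorMeasure X (Matrix (Fin 2) (Fin 2) ℂ))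
    (hpos : ∀ E : Set X, (ν E).PosSemidef)
    (hγ : ∀ γ : Fin 2 → ℂ, ∃ (x : Fin n → X) (c : Fin n → ℝ), (∀ j, 0 ≤ c j) ∧
      ∀ E : Set X, MeasurableSet E →
        dotProduct (star γ) ((ν E).mulVec γ) =
          ∑ j, E.indicator (fun _ => (c j : ℂ)) (x j)) :
    ∃ (x : Fin n → X) (Q : Fin n → Matrix (Fin 2) (Fin 2) ℂ),
      (∀ j, (Q j).PosSemidef) ∧
      ∀ E : Set X, MeasurableSet E →
        ν E = ∑ j, E.indicator (fun _ => Q j) (x j) := by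
  classical
  choose xd _ _ hxd using fun i : Fin 2 => hγ (Pi.single i 1)
  set S := univ.biUnion fun i => univ.image (xd i)
  have hνS : ∀ E, MeasurableSet E → ν E = ∑ p ∈ S, E.indicator (fun _ => ν {p}) p :=
    fun E => ν.eq_sum_indicator_of_forall_disjoint S fun E hE hES =>
      (hpos E).eq_zero_of_diag_eq_zero fun i => by
        rw [apply_self_eq_star_dotProduct_mulVec (ν E) i, hxd i E hE]
        exact sum_eq_zero fun j _ => Set.indicator_of_notMem (Set.disjoint_right.mp hES
          (mem_biUnion.mpr ⟨i, mem_univ i, mem_image_of_mem _ (mem_univ j)⟩)) _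
  set T := S.filter fun p => ν {p} ≠ 0
  obtain ⟨γ, hγT⟩ := exists_forall_star_dotProduct_mulVec_ne_zero
    (Q := fun p : T => ν {(p : X)}) (fun p => hpos _) fun p => (mem_filter.mp p.2).2
  obtain ⟨x, c, -, hx⟩ := hγ γ
  have hTx : T ⊆ univ.image x := by
    intro p hp
    by_contra hpx
    refine hγT ⟨p, hp⟩ ?_
    rw [hx {p} (measurableSet_singleton p)]
    exact sum_eq_zero fun j _ => Set.indicator_of_notMem
      (s := {p}) (fun h => hpx (mem_image.mpr ⟨j, mem_univ j, h⟩)) _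
  have hTn : T.card ≤ n := (card_le_card hTx).trans (card_image_le.trans_eq (card_fin n))
  obtain ⟨x', Q, hQ, hsum⟩ := exists_fin_sum_indicator_eq PosSemidef PosSemidef.zero T
    (fun p => ν {p}) (fun p _ => hpos _) hTn
  refine ⟨x', Q, hQ, fun E hE => ?_⟩
  rw [hνS E hE, ← hsum]
  refine (sum_filter_of_ne (p := fun p => ν {p} ≠ 0) fun p _ hp hν => hp ?_).symm
  rw [hν, Set.indicator_zero]

theorem stmt19 (X : Type*) [MetricSpace X] [CompactSpace X] [Nonempty X]
    [MeasurableSpace X] [BorelSpace X] (n : ℕ)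
    (ν : VectorMeasure X (Matrix (Fin 2) (Fin 2) ℂ))
    (hpos : ∀ E : Set X, (ν E).PosSemidef)
    (hγ : ∀ γ : Fin 2 → ℂ, ∃ (x : Fin n → X) (c : Fin n → ℝ), (∀ j, 0 ≤ c j) ∧
      ∀ E : Set X, MeasurableSet E →
        dotProduct (star γ) ((ν E).mulVec γ) =
          ∑ j, E.indicator (fun _ => (c j : ℂ)) (x j)) :
    ∃ (x : Fin n → X) (Q : Fin n → Matrix (Fin 2) (Fin 2) ℂ),
      (∀ j, (Q j).PosSemidef) ∧
      ∀ E : Set X, MeasurableSet E →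
        ν E = ∑ j, E.indicator (fun _ => Q j) (x j) :=
  stmt19_general X n ν hpos hγ
end
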